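/- Let f(x,y) = min(x², y³) on the region x, y ≥ 0 and consider the arc γ(t) = (t^{3/2}, t). Then ord_γ f = 3; moreover, for arcs γ_s(t) = (t^{3/2}(1+s), t) with small s > 0 one has ord f ∘ γ_s = 3 (via y³), while for small s < 0 one has ord f ∘ γ_s = 3 (via x²), but the contact orders realizing constant order 3 on the two sides differ: on the x²-side the zone of order 3 has size 1, and on the y³-side it has size 3/2. -/

import Mathlib

/-! Along `γ_s(t) = (t^{3/2}(1+s), t)` both monomials are exact multiples of `t³`:
`x² = (1+s)² t³` and `y³ = t³`, so `f ∘ γ_s = min((1+s)², 1) t³` has order 3 for every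
`s > -1`, with leading coefficient `(1+s)²` on the `x²`-side and `1` on the `y³`-side.
The contact orders come from the distances between the arcs, `t - t^{3/2}` for the
diagonal and `|s| t^{3/2}` for `γ_s`. -/

open Asymptotics Filter

def HasOrdC (f : ℝ → ℝ) (α a : ℝ) : Prop :=
  a ≠ 0 ∧ (fun t => f t - a * t ^ α) =o[nhdsWithin 0 (Set.Ioi 0)] fun t => t ^ α

def HasOrd (f : ℝ → ℝ) (α : ℝ) : Prop := ∃ a, HasOrdC f α a

open Topology

lemma hasOrdC_const_mul_rpow {α a : ℝ} (ha : a ≠ 0) : HasOrdC (fun t => a * t ^ α) α a :=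
  ⟨ha, (isLittleO_zero _ _).congr_left fun _ => (sub_self _).symm⟩

lemma HasOrdC.congr' {g g' : ℝ → ℝ} {α a : ℝ} (hg : HasOrdC g α a)
    (h : g =ᶠ[𝓝[>] 0] g') : HasOrdC g' α a :=
  ⟨hg.1, hg.2.congr' (h.sub EventuallyEq.rfl) EventuallyEq.rfl⟩

lemma HasOrdC.sub_isLittleO {g h : ℝ → ℝ} {α a : ℝ} (hg : HasOrdC g α a)
    (hh : h =o[𝓝[>] 0] fun t => t ^ α) : HasOrdC (g - h) α a :=
  ⟨hg.1, (hg.2.sub hh).congr_left fun t => by simp only [Pi.sub_apply]; ring⟩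

lemma rpow_isLittleO_rpow_nhdsGT_zero {α β : ℝ} (hαβ : α < β) :
    (fun t : ℝ => t ^ β) =o[𝓝[>] 0] fun t => t ^ α := by
  have hsmall : (fun t : ℝ => t ^ (β - α)) =o[𝓝[>] 0] fun _ => (1 : ℝ) := by
    rw [isLittleO_one_iff]
    have := (Real.continuousAt_rpow_const 0 (β - α) (Or.inr (sub_pos.2 hαβ).le)).tendsto
    rw [Real.zero_rpow (sub_pos.2 hαβ).ne'] at this
    exact this.mono_left nhdsWithin_le_nhds
  refine (hsmall.mul_isBigO (isBigO_refl (fun t : ℝ => t ^ α) _)).congr' ?_ ?_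
  · filter_upwards [self_mem_nhdsWithin] with t (ht : 0 < t)
    rw [← Real.rpow_add ht, sub_add_cancel]
  · exact Eventually.of_forall fun t => one_mul _

lemma Prod.norm_mk_sub_mk_same_snd {E F : Type*} [SeminormedAddCommGroup E]
    [SeminormedAddCommGroup F] (x x' : E) (y : F) : ‖(x, y) - (x', y)‖ = ‖x - x'‖ := by
  rw [Prod.mk_sub_mk, sub_self, Prod.norm_mk, norm_zero, max_eq_left (norm_nonneg _)]

lemma rpow_three_halves_sq {t : ℝ} (ht : 0 ≤ t) : (t ^ ((3:ℝ)/2)) ^ 2 = t ^ 3 := by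
  rw [← Real.rpow_mul_natCast ht, ← Real.rpow_natCast]; norm_num

lemma apply_deformed_arc {f : ℝ → ℝ → ℝ}
    (hf : ∀ x y : ℝ, 0 ≤ x → 0 ≤ y → f x y = min (x ^ 2) (y ^ 3))
    {s t : ℝ} (hs : -1 ≤ s) (ht : 0 ≤ t) :
    f (t ^ ((3:ℝ)/2) * (1 + s)) t = min ((1 + s) ^ 2) 1 * t ^ (3:ℝ) := by
  have h1s : 0 ≤ 1 + s := by linarith
  rw [hf _ _ (by positivity) ht, mul_pow, rpow_three_halves_sq ht, Real.rpow_ofNat,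
    min_mul_of_nonneg _ _ (by positivity), mul_comm, one_mul]

lemma hasOrd_deformed_arc {f : ℝ → ℝ → ℝ}
    (hf : ∀ x y : ℝ, 0 ≤ x → 0 ≤ y → f x y = min (x ^ 2) (y ^ 3))
    {s : ℝ} (hs : -1 < s) :
    HasOrd (fun t => f (t ^ ((3:ℝ)/2) * (1 + s)) t) 3 := by
  have hcoeff : min ((1 + s) ^ 2) 1 ≠ 0 := (lt_min (by nlinarith) one_pos).ne'
  refine ⟨_, (hasOrdC_const_mul_rpow hcoeff).congr' ?_⟩
  filter_upwards [self_mem_nhdsWithin] with t (ht : 0 < t)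
  exact (apply_deformed_arc hf hs.le ht.le).symm

lemma hasOrd_diagonal {f : ℝ → ℝ → ℝ}
    (hf : ∀ x y : ℝ, 0 ≤ x → 0 ≤ y → f x y = min (x ^ 2) (y ^ 3)) :
    HasOrd (fun t => f t t) 3 := by
  refine ⟨1, (hasOrdC_const_mul_rpow one_ne_zero).congr' ?_⟩
  filter_upwards [Ioo_mem_nhdsGT zero_lt_one] with t ⟨ht0, ht1⟩
  rw [hf _ _ ht0.le ht0.le, min_eq_right (pow_le_pow_of_le_one ht0.le ht1.le (by norm_num)),
    one_mul, Real.rpow_ofNat]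

lemma hasOrd_dist_diagonal_arc :
    HasOrd (fun t => ‖((t, t) : ℝ × ℝ) - (t ^ ((3:ℝ)/2), t)‖) 1 := by
  refine ⟨1, (((hasOrdC_const_mul_rpow one_ne_zero).sub_isLittleO
    (rpow_isLittleO_rpow_nhdsGT_zero (by norm_num : (1:ℝ) < 3/2))).congr' ?_)⟩
  filter_upwards [Ioo_mem_nhdsGT zero_lt_one] with t ⟨ht0, ht1⟩
  have hle : t ^ ((3:ℝ)/2) ≤ t := by
    simpa using Real.rpow_le_rpow_of_exponent_ge ht0 ht1.le (by norm_num : (1:ℝ) ≤ 3/2)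
  rw [Prod.norm_mk_sub_mk_same_snd, Real.norm_of_nonneg (sub_nonneg.2 hle), Pi.sub_apply,
    one_mul, Real.rpow_one]

lemma hasOrd_dist_deformed_arc {s : ℝ} (hs : s ≠ 0) :
    HasOrd (fun t => ‖((t ^ ((3:ℝ)/2) * (1 + s), t) : ℝ × ℝ) - (t ^ ((3:ℝ)/2), t)‖)
      ((3:ℝ)/2) := by
  refine ⟨|s|, (hasOrdC_const_mul_rpow (abs_ne_zero.2 hs)).congr' ?_⟩
  filter_upwards [self_mem_nhdsWithin] with t (ht : 0 < t)
  rw [Prod.norm_mk_sub_mk_same_snd, mul_one_add, add_sub_cancel_left, norm_mul,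
    Real.norm_of_nonneg (by positivity), Real.norm_eq_abs, mul_comm]

theorem stmt13 (f : ℝ → ℝ → ℝ)
    (hf : ∀ x y : ℝ, 0 ≤ x → 0 ≤ y → f x y = min (x ^ 2) (y ^ 3)) :
    -- ord of f along γ(t) = (t^{3/2}, t) is 3
    HasOrd (fun t => f (t ^ ((3:ℝ)/2)) t) 3 ∧
    -- for small s > 0 (arc on the y³-side) the order is still 3
    (∃ ε > (0:ℝ), ∀ s : ℝ, 0 < s → s < ε →
      HasOrd (fun t => f (t ^ ((3:ℝ)/2) * (1 + s)) t) 3) ∧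
    -- for small s < 0 (arc on the x²-side) the order is still 3
    (∃ ε > (0:ℝ), ∀ s : ℝ, -ε < s → s < 0 →
      HasOrd (fun t => f (t ^ ((3:ℝ)/2) * (1 + s)) t) 3) ∧
    -- on the x²-side the zone of order 3 has size 1: the arc (t,t) also has
    -- order 3 but contact of order 1 with γ
    HasOrd (fun t => f t t) 3 ∧
    HasOrd (fun t => ‖((t, t) : ℝ × ℝ) - (t ^ ((3:ℝ)/2), t)‖) 1 ∧
    -- on the y³-side the zone of order 3 has size 3/2: the deformed arcs have
    -- contact of order 3/2 with γ
    (∀ s : ℝ, s ≠ 0 →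
      HasOrd (fun t => ‖((t ^ ((3:ℝ)/2) * (1 + s), t) : ℝ × ℝ) -
        (t ^ ((3:ℝ)/2), t)‖) ((3:ℝ)/2)) := by
  refine ⟨?_, ⟨1, one_pos, fun s hs _ => hasOrd_deformed_arc hf (by linarith)⟩,
    ⟨1, one_pos, fun s hs _ => hasOrd_deformed_arc hf hs⟩, hasOrd_diagonal hf,
    hasOrd_dist_diagonal_arc, fun s hs => hasOrd_dist_deformed_arc hs⟩
  simpa using hasOrd_deformed_arc hf (s := 0) (by norm_num)
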